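/- arXiv:1809.09539 — 7 statements merged into one kernel-verified Lean document; each statement's English description precedes it below -/
import Mathlib

section
/- Let (K, v) be a valued field with v: K* → ℝ of rank one, and let E = {s_n} be a pseudo-convergent sequence of transcendental type (i.e. v(f(s_n)) is eventually constant for every polynomial f ∈ K[X]). Then for every rational function φ ∈ K(X) \ {0}, the sequence v(φ(s_n)) is eventually constant, and the map w_E(φ) = lim_n v(φ(s_n)) defines a valuation on K(X) extending v. -/
/-!
Write `φ = p / q`. Since `v (φ (s n)) = v (p (s n)) - v (q (s n))`, the
transcendental type of `E` makes `v (φ (s n))` eventually constant, with limit `w_E φ`.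
The differences of a pseudo-convergent sequence have strictly increasing, hence finite,
valuations, so `E` is injective and eventually avoids the finitely many roots of any nonzero
polynomial. Eventually, then, evaluation at `s n` is additive and multiplicative on any
two given rational functions, and the valuation axioms for `w_E` are inherited from `v`.
-/

open Filter Polynomial

theorem Function.Injective.eventually_eval_ne_zero {R : Type*} [CommRing R] [IsDomain R]
    {s : ℕ → R} (hs : Function.Injective s) {f : R[X]} (hf : f ≠ 0) :
    ∀ᶠ n in atTop, f.eval (s n) ≠ 0 := by
  rw [← Nat.cofinite_eq_atTop]
  exact hs.tendsto_cofinite.eventually (finite_setOfPred_isRoot hf).eventually_cofinite_notMem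

namespace AddValuation

variable {R K Γ₀ : Type*}

section PseudoConvergent

variable [Ring R] [LinearOrderedAddCommMonoidWithTop Γ₀] (v : AddValuation R Γ₀)

def IsPseudoConvergent (s : ℕ → R) : Prop :=
  StrictMono fun n => v (s (n + 1) - s n)

variable {v} {s : ℕ → R}

theorem IsPseudoConvergent.map_sub_eq (hs : v.IsPseudoConvergent s) {n m : ℕ} (h : n < m) :
    v (s m - s n) = v (s (n + 1) - s n) := by
  induction m, h using Nat.le_induction with
  | base => rfl
  | succ m hnm ih =>
    have hlt : v (s m - s n) < v (s (m + 1) - s m) := ih ▸ hs hnm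
    rw [← sub_add_sub_cancel (s (m + 1)) (s m) (s n), add_comm, map_add_eq_of_lt_left v hlt, ih]

theorem IsPseudoConvergent.injective (hs : v.IsPseudoConvergent s) : Function.Injective s := by
  refine .of_lt_imp_ne fun n m hnm heq => ?_
  have hfin : v (s (n + 1) - s n) < ⊤ := (hs n.lt_succ_self).trans_le le_top
  rw [← hs.map_sub_eq hnm, ← heq, sub_self, map_zero] at hfin
  exact hfin.false

end PseudoConvergent

variable [Field K] {ι : Type*} {l : Filter ι} {s : ι → K}

theorem exists_eventually_map_ratFunc_eval_eq [LinearOrderedAddCommGroupWithTop Γ₀]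
    (v : AddValuation K Γ₀) (hpoly : ∀ f : K[X], ∃ c : Γ₀, ∀ᶠ i in l, v (f.eval (s i)) = c)
    (φ : RatFunc K) : ∃ c : Γ₀, ∀ᶠ i in l, v (φ.eval (RingHom.id K) (s i)) = c := by
  obtain ⟨a, ha⟩ := hpoly φ.num
  obtain ⟨b, hb⟩ := hpoly φ.denom
  refine ⟨a - b, ?_⟩
  filter_upwards [ha, hb] with i hai hbi
  rw [RatFunc.eval, eval₂_id, eval₂_id, map_div, hai, hbi]

theorem exists_addValuation_ratFunc_eventually_eq [LinearOrderedAddCommMonoidWithTop Γ₀]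
    [l.NeBot] (v : AddValuation K Γ₀) (hroots : ∀ f : K[X], f ≠ 0 → ∀ᶠ i in l, f.eval (s i) ≠ 0)
    (hconst : ∀ φ : RatFunc K, ∃ c : Γ₀, ∀ᶠ i in l, v (φ.eval (RingHom.id K) (s i)) = c) :
    ∃ w : AddValuation (RatFunc K) Γ₀,
      ∀ φ, ∀ᶠ i in l, v (φ.eval (RingHom.id K) (s i)) = w φ := by
  choose w hw using hconst
  have w_eq : ∀ φ c, (∀ᶠ i in l, v (φ.eval (RingHom.id K) (s i)) = c) → w φ = c :=
    fun φ c h => eventually_const.mp <| ((hw φ).and h).mono fun _ h => h.1.symm.trans h.2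
  have hdenom (φ : RatFunc K) : ∀ᶠ i in l, φ.denom.eval₂ (RingHom.id K) (s i) ≠ 0 :=
    hroots _ φ.denom_ne_zero
  refine ⟨of w (w_eq _ _ (.of_forall fun _ => by simp)) (w_eq _ _ (.of_forall fun _ => by simp))
    (fun φ ψ => ?_) (fun φ ψ => w_eq _ _ ?_), hw⟩
  · obtain ⟨i, hφ, hψ, hφψ, hdφ, hdψ⟩ :=
      ((hw φ).and <| (hw ψ).and <| (hw (φ + ψ)).and <| (hdenom φ).and (hdenom ψ)).exists
    rw [← hφ, ← hψ, ← hφψ, RatFunc.eval_add _ _ hdφ hdψ]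
    exact v.map_add _ _
  · filter_upwards [hw φ, hw ψ, hdenom φ, hdenom ψ] with i hφ hψ hdφ hdψ
    rw [RatFunc.eval_mul _ _ hdφ hdψ, map_mul, hφ, hψ]

end AddValuation

/-- For a pseudo-convergent sequence E of transcendental type in a rank one
valued field, v(φ(s_n)) is eventually constant for every nonzero φ ∈ K(X), and
w_E(φ) = lim v(φ(s_n)) defines a valuation on K(X) extending v. -/
theorem stmt6 {K : Type*} [Field K] (v : AddValuation K (WithTop ℝ)) (s : ℕ → K)
    (hE : ∀ n, v (s (n + 1) - s n) < v (s (n + 2) - s (n + 1)))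
    (htr : ∀ f : Polynomial K, ∃ c : WithTop ℝ, ∀ᶠ n in atTop, v (f.eval (s n)) = c) :
    ∃ w : AddValuation (RatFunc K) (WithTop ℝ),
      (∀ c : K, w (RatFunc.C c) = v c) ∧
      ∀ φ : RatFunc K, φ ≠ 0 →
        ∀ᶠ n in atTop, v (RatFunc.eval (RingHom.id K) (s n) φ) = w φ := by
  have hpc : v.IsPseudoConvergent s := strictMono_nat_of_lt_succ hE
  obtain ⟨w, hw⟩ := v.exists_addValuation_ratFunc_eventually_eq
    (fun _ hf => hpc.injective.eventually_eval_ne_zero hf)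
    (v.exists_eventually_map_ratFunc_eval_eq htr)
  refine ⟨w, fun c => ?_, fun φ _ => hw φ⟩
  have hC := hw (RatFunc.C c)
  simp only [RatFunc.eval_C, RingHom.id_apply] at hC
  exact (eventually_const.mp hC).symm
end

section
/- Let (K, v) be an algebraically closed valued field of rank one, let E = {s_n} be a pseudo-convergent sequence of algebraic type with pseudo-limit β ∈ K, and let φ ∈ K(X) be nonzero. Let λ be the weighted sum (zeros counted +1, poles counted −1, with multiplicity) of the zeros and poles of φ that are pseudo-limits of E. Then there exists γ ∈ v(K*) such that v(φ(s_n)) = λ·δ_n + γ for all sufficiently large n, where δ_n = v(s_{n+1} - s_n). -/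
/-!
Write `φ(sₙ) = c ∏ (sₙ - αᵢ) ^ εᵢ`. If `α` is a pseudo-limit of `E`, then `v (α - sₙ) = δₙ`,
because `sₙ₊₁ - sₙ = (α - sₙ) - (α - sₙ₊₁)` and the second term has the larger value. If `α` is
not a pseudo-limit, then `v (α - sₖ) < δₖ` for some `k`, and since `δ` increases, the values
`v (α - sₙ) = v ((α - sₙ₋₁) - (sₙ - sₙ₋₁))` stay equal to `v (α - sₖ)` from then on. So for
large `n`, `v (φ(sₙ))` is `λ • δₙ` plus the constant `v c + ∑ εᵢ • v (αᵢ - s_N)` over the `αᵢ`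
that are not pseudo-limits.
-/

open scoped Classical

open Filter Finset Polynomial

theorem zpow_eq_pow_toNat_div_pow_toNat_neg {G₀ : Type*} [GroupWithZero G₀] (x : G₀) (n : ℤ) :
    x ^ n = x ^ n.toNat / x ^ (-n).toNat := by
  cases n with
  | ofNat k => simp
  | negSucc k => simp [zpow_negSucc, Int.neg_negSucc]

section WithTopZsmul

variable {G : Type*} [AddCommGroup G] [LinearOrder G] [IsOrderedAddMonoid G]

theorem WithTop.LinearOrderedAddCommGroup.coe_zsmul (n : ℤ) (a : G) :
    ((n • a : G) : WithTop G) = n • (a : WithTop G) := by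
  cases n with
  | ofNat k => simp [WithTop.coe_nsmul]
  | negSucc k =>
    rw [negSucc_zsmul, negSucc_zsmul, WithTop.LinearOrderedAddCommGroup.coe_neg, WithTop.coe_nsmul]

-- `(1 • ⊤) + ((-1) • ⊤) = ⊤ ≠ 0 = 0 • ⊤`, so finiteness of `x` is needed.
theorem WithTop.sum_zsmul_of_ne_top {ι : Type*} (t : Finset ι) (ε : ι → ℤ) {x : WithTop G}
    (hx : x ≠ ⊤) : ∑ i ∈ t, ε i • x = (∑ i ∈ t, ε i) • x := by
  lift x to G using hx
  simp only [← WithTop.LinearOrderedAddCommGroup.coe_zsmul, ← WithTop.coe_sum, Finset.sum_smul]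

end WithTopZsmul

namespace AddValuation

theorem map_zpow {K Γ₀ : Type*} [DivisionRing K] [LinearOrderedAddCommGroupWithTop Γ₀]
    (v : AddValuation K Γ₀) (x : K) (n : ℤ) : v (x ^ n) = n • v x := by
  cases n with
  | ofNat k => simp [v.map_pow]
  | negSucc k => rw [zpow_negSucc, v.map_inv, v.map_pow, negSucc_zsmul]

theorem map_prod {R Γ₀ : Type*} [CommRing R] [LinearOrderedAddCommMonoidWithTop Γ₀]
    (v : AddValuation R Γ₀) {ι : Type*} (t : Finset ι) (f : ι → R) :
    v (∏ i ∈ t, f i) = ∑ i ∈ t, v (f i) := by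
  induction t using Finset.cons_induction with
  | empty => simp
  | cons a t ha ih => rw [Finset.prod_cons, Finset.sum_cons, v.map_mul, ih]

end AddValuation

universe u

namespace RatFunc

variable {K L : Type u} [Field K] [Field L] {f : K →+* L} {a : L}

theorem eval_algebraMap_div_algebraMap {p q : K[X]} (hq : q.eval₂ f a ≠ 0) :
    eval f a (algebraMap K[X] (RatFunc K) p / algebraMap K[X] (RatFunc K) q) =
      p.eval₂ f a / q.eval₂ f a := by
  have hq0 : q ≠ 0 := by rintro rfl; exact hq (eval₂_zero f a)
  have hdenom :
      (algebraMap K[X] (RatFunc K) p / algebraMap K[X] (RatFunc K) q).denom.eval₂ f a ≠ 0 :=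
    fun h => hq (eval₂_eq_zero_of_dvd_of_eval₂_eq_zero f a (denom_div_dvd p q) h)
  rw [eval, div_eq_div_iff hdenom hq, ← eval₂_mul, ← eval₂_mul,
    (num_mul_eq_mul_denom_iff hq0).2 rfl]

theorem eval_C_mul_prod_X_sub_C_zpow {ι : Type*} (t : Finset ι) (c : K) (α : ι → K)
    (ε : ι → ℤ) (ha : ∀ i ∈ t, a ≠ f (α i)) :
    eval f a (C c * ∏ i ∈ t, (X - C (α i)) ^ ε i) = f c * ∏ i ∈ t, (a - f (α i)) ^ ε i := by
  set p : K[X] := Polynomial.C c * ∏ i ∈ t, (Polynomial.X - Polynomial.C (α i)) ^ (ε i).toNat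
  set q : K[X] := ∏ i ∈ t, (Polynomial.X - Polynomial.C (α i)) ^ (-ε i).toNat
  have hpq : C c * ∏ i ∈ t, (X - C (α i)) ^ ε i =
      algebraMap K[X] (RatFunc K) p / algebraMap K[X] (RatFunc K) q := by
    simp only [p, q, map_mul, map_prod, map_pow, map_sub, algebraMap_C, algebraMap_X,
      mul_div_assoc, ← Finset.prod_div_distrib, ← zpow_eq_pow_toNat_div_pow_toNat_neg]
  have hq : q.eval₂ f a ≠ 0 := by
    simp only [q, eval₂_finsetProd, eval₂_pow, eval₂_sub, eval₂_X, eval₂_C]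
    exact Finset.prod_ne_zero_iff.2 fun i hi => pow_ne_zero _ (sub_ne_zero.2 (ha i hi))
  rw [hpq, eval_algebraMap_div_algebraMap hq]
  simp only [p, q, eval₂_mul, eval₂_finsetProd, eval₂_pow, eval₂_sub, eval₂_X, eval₂_C,
    mul_div_assoc, ← Finset.prod_div_distrib, ← zpow_eq_pow_toNat_div_pow_toNat_neg]

end RatFunc

section PseudoConvergent

variable {R Γ₀ : Type*} [Ring R] [LinearOrderedAddCommMonoidWithTop Γ₀] (v : AddValuation R Γ₀)
  {s : ℕ → R} {x : R}

def IsPseudoLimit (v : AddValuation R Γ₀) (s : ℕ → R) (x : R) : Prop :=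
  ∀ n, v (x - s n) < v (x - s (n + 1))

theorem IsPseudoLimit.val_sub (hx : IsPseudoLimit v s x) (n : ℕ) :
    v (x - s n) = v (s (n + 1) - s n) := by
  rw [← v.map_sub_eq_of_lt_left (hx n), sub_sub_sub_cancel_left]

theorem exists_val_sub_lt_of_not_isPseudoLimit
    (hs : StrictMono fun n => v (s (n + 1) - s n)) (hx : ¬IsPseudoLimit v s x) :
    ∃ k, v (x - s k) < v (s (k + 1) - s k) := by
  by_contra! h
  have hval : ∀ k, v (x - s k) = v (s (k + 1) - s k) := by
    intro k
    refine le_antisymm (not_lt.1 fun hlt => ?_) (h k)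
    have hnext : v (x - s (k + 1)) = v (s (k + 1) - s k) := by
      rw [← sub_sub_sub_cancel_right x (s (k + 1)) (s k), v.map_sub_eq_of_lt_right hlt]
    exact (h (k + 1)).not_gt (hnext ▸ hs k.lt_succ_self)
  exact hx fun n => by rw [hval, hval]; exact hs n.lt_succ_self

theorem val_sub_eq_of_val_sub_lt (hs : Monotone fun n => v (s (n + 1) - s n)) {k : ℕ}
    (hk : v (x - s k) < v (s (k + 1) - s k)) {n : ℕ} (hn : k ≤ n) :
    v (x - s n) = v (x - s k) := by
  induction n, hn using Nat.le_induction with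
  | base => rfl
  | succ n hn ih =>
    rw [← ih, ← sub_sub_sub_cancel_right x (s (n + 1)) (s n)]
    exact v.map_sub_eq_of_lt_left (ih ▸ hk.trans_le (hs hn))

theorem eventuallyConst_val_sub_of_not_isPseudoLimit
    (hs : StrictMono fun n => v (s (n + 1) - s n)) (hx : ¬IsPseudoLimit v s x) :
    EventuallyConst (fun n => v (x - s n)) atTop := by
  obtain ⟨k, hk⟩ := exists_val_sub_lt_of_not_isPseudoLimit v hs hx
  exact eventuallyConst_atTop.2 ⟨k, fun n hn => val_sub_eq_of_val_sub_lt v hs.monotone hk hn⟩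

theorem eventually_val_sub_ne_top (hs : StrictMono fun n => v (s (n + 1) - s n)) (x : R) :
    ∀ᶠ n in atTop, v (x - s n) ≠ ⊤ := by
  by_cases hx : IsPseudoLimit v s x
  · exact Eventually.of_forall fun n => ((hx n).trans_le le_top).ne
  · obtain ⟨k, hk⟩ := exists_val_sub_lt_of_not_isPseudoLimit v hs hx
    filter_upwards [eventually_ge_atTop k] with n hn
    rw [val_sub_eq_of_val_sub_lt v hs.monotone hk hn]
    exact (hk.trans_le le_top).ne

end PseudoConvergent

theorem stmt8_general {K : Type*} [Field K]
    (v : AddValuation K (WithTop ℝ)) (s : ℕ → K)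
    (hE : ∀ n, v (s (n + 1) - s n) < v (s (n + 2) - s (n + 1)))
    (φ : RatFunc K)
    (c : K) (hc : c ≠ 0) {m : ℕ} (α : Fin m → K) (ε : Fin m → ℤ)
    (hfact : φ = RatFunc.C c * ∏ i, (RatFunc.X - RatFunc.C (α i)) ^ (ε i))
    (lam : ℤ)
    (hlam : lam = ∑ i ∈ Finset.univ.filter
      (fun i => ∀ n, v (α i - s n) < v (α i - s (n + 1))), ε i) :
    ∃ γ : K, γ ≠ 0 ∧ ∃ N, ∀ n ≥ N,
      v (RatFunc.eval (RingHom.id K) (s n) φ) = lam • v (s (n + 1) - s n) + v γ := by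
  have hs : StrictMono fun n => v (s (n + 1) - s n) := strictMono_nat_of_lt_succ hE
  have hconst : ∀ i, ¬IsPseudoLimit v s (α i) → ∃ w, ∀ᶠ n in atTop, v (α i - s n) = w :=
    fun i hi => (eventuallyConst_val_sub_of_not_isPseudoLimit v hs hi).eventuallyEq_const
  choose! w hw using hconst
  obtain ⟨N, hN⟩ := eventually_atTop.1 (eventually_all.2 fun i =>
    (eventually_val_sub_ne_top v hs (α i)).and (eventually_imp_distrib_left.2 (hw i)))
  have hne : ∀ n ≥ N, ∀ i, s n - α i ≠ 0 := fun n hn i => by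
    rw [← v.ne_top_iff, v.map_sub_swap]; exact (hN n hn i).1
  refine ⟨c * ∏ i ∈ univ.filter (fun i => ¬IsPseudoLimit v s (α i)), (s N - α i) ^ ε i,
    mul_ne_zero hc (prod_ne_zero_iff.2 fun i _ => zpow_ne_zero _ (hne N le_rfl i)), N,
    fun n hn => ?_⟩
  have hlim : ∀ i ∈ univ.filter (fun i => IsPseudoLimit v s (α i)),
      ε i • v (s n - α i) = ε i • v (s (n + 1) - s n) := fun i hi => by
    rw [v.map_sub_swap, (mem_filter.1 hi).2.val_sub]
  have hfar : ∀ i ∈ univ.filter (fun i => ¬IsPseudoLimit v s (α i)),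
      ε i • v (s n - α i) = ε i • v (s N - α i) := fun i hi => by
    have hnot := (mem_filter.1 hi).2
    rw [v.map_sub_swap, v.map_sub_swap (s N), (hN n hn i).2 hnot, (hN N le_rfl i).2 hnot]
  rw [hfact, RatFunc.eval_C_mul_prod_X_sub_C_zpow _ _ _ _ fun i _ => sub_ne_zero.1 (hne n hn i)]
  simp only [RingHom.id_apply, v.map_mul, v.map_prod, v.map_zpow]
  rw [← sum_filter_add_sum_filter_not univ (fun i => IsPseudoLimit v s (α i)), sum_congr rfl hlim,
    sum_congr rfl hfar, WithTop.sum_zsmul_of_ne_top _ _ (hE n).ne_top]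
  exact hlam ▸ add_left_comm _ _ _

/-- For a pseudo-convergent sequence E of algebraic type with pseudo-limit β in an
algebraically closed rank one valued field, and φ nonzero with dominating degree λ
(the weighted sum of critical points of φ that are pseudo-limits of E), there is
γ ∈ v(K*) with v(φ(s_n)) = λ·δ_n + γ for all large n, where δ_n = v(s_{n+1} - s_n). -/
theorem stmt8 {K : Type*} [Field K] [IsAlgClosed K]
    (v : AddValuation K (WithTop ℝ)) (s : ℕ → K)
    (hE : ∀ n, v (s (n + 1) - s n) < v (s (n + 2) - s (n + 1)))
    (β : K) (hβ : ∀ n, v (β - s n) < v (β - s (n + 1)))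
    (halg : ∃ f : Polynomial K, ∃ N, ∀ n ≥ N, v (f.eval (s n)) < v (f.eval (s (n + 1))))
    (φ : RatFunc K) (hφ : φ ≠ 0)
    (c : K) (hc : c ≠ 0) {m : ℕ} (α : Fin m → K) (ε : Fin m → ℤ)
    (hε : ∀ i, ε i = 1 ∨ ε i = -1)
    (hfact : φ = RatFunc.C c * ∏ i, (RatFunc.X - RatFunc.C (α i)) ^ (ε i))
    (lam : ℤ)
    (hlam : lam = ∑ i ∈ Finset.univ.filter
      (fun i => ∀ n, v (α i - s n) < v (α i - s (n + 1))), ε i) :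
    ∃ γ : K, γ ≠ 0 ∧ ∃ N, ∀ n ≥ N,
      v (RatFunc.eval (RingHom.id K) (s n) φ) = lam • v (s (n + 1) - s n) + v γ :=
  stmt8_general v s hE φ c hc α ε hfact lam hlam
end

section
/- Let E = {s_n} ⊂ K be a pseudo-convergent sequence with pseudo-limit β ∈ K, and let f(X) = Σ_{i=0}^{d} a_i (X - β)^i ∈ K[X]. Then there exists a unique k ∈ {0,...,d} and N ∈ ℕ such that for all n ≥ N, v(f(s_n)) = v(a_k) + k·v(s_n - β), and moreover v(a_k) + k·δ_n < v(a_i) + i·δ_n for all i ≠ k with a_i ≠ 0 and all n ≥ N, where δ_n = v(s_n - β). -/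
/-!
Put δ_n = v(s_n - β); it is strictly increasing. For i ≠ j the difference of the term valuations
(v(a_j) + j δ_n) - (v(a_i) + i δ_n) is strictly monotone in n, so it eventually has a constant
sign. Among the finitely many nonzero terms one therefore eventually has strictly the smallest
valuation, and by the ultrametric inequality it alone gives v(f(s_n)); two such indices would
each be eventually below the other, so it is unique.
-/

open Filter

theorem AddValuation.map_sum_eq_of_lt {R Γ₀ ι : Type*} [Ring R]
    [LinearOrderedAddCommMonoidWithTop Γ₀]
    (v : AddValuation R Γ₀) [DecidableEq ι] {s : Finset ι} {f : ι → R} {j : ι}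
    (hj : j ∈ s) (hf : ∀ i ∈ s \ {j}, v (f j) < v (f i)) :
    v (∑ i ∈ s, f i) = v (f j) :=
  Valuation.map_sum_eq_of_lt v hj hf

theorem StrictMono.eventually_lt_or_eventually_gt {α : Type*} [LinearOrder α] {g : ℕ → α}
    (hg : StrictMono g) (x : α) : (∀ᶠ n in atTop, x < g n) ∨ ∀ᶠ n in atTop, g n < x := by
  by_cases h : ∃ n, x ≤ g n
  · obtain ⟨n, hn⟩ := h
    exact .inl (eventually_atTop.2 ⟨n + 1, fun m hm => hn.trans_lt (hg (by omega))⟩)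
  · simp only [not_exists, not_le] at h
    exact .inr (.of_forall h)

theorem eventually_add_nsmul_lt_or_gt {Γ : Type*} [AddCommGroup Γ] [LinearOrder Γ]
    [IsOrderedAddMonoid Γ] {c : ℕ → Γ} (hc : StrictMono c) (b b' : Γ) {i j : ℕ}
    (hij : i < j) :
    (∀ᶠ n in atTop, b + i • c n < b' + j • c n) ∨
      ∀ᶠ n in atTop, b' + j • c n < b + i • c n := by
  have hdiff : ∀ n, b' + j • c n - (b + i • c n) = b' - b + (j - i) • c n := fun n => by
    rw [← Nat.sub_add_cancel hij.le, add_nsmul, Nat.add_sub_cancel]; abel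
  have hmono : StrictMono fun n => b' + j • c n - (b + i • c n) := by
    simpa only [hdiff] using (hc.const_nsmul (Nat.sub_ne_zero_of_lt hij)).const_add (b' - b)
  simpa only [sub_pos, sub_neg] using hmono.eventually_lt_or_eventually_gt 0

theorem WithTop.eventually_add_nsmul_lt_or_gt {Γ : Type*} [AddCommGroup Γ] [LinearOrder Γ]
    [IsOrderedAddMonoid Γ] {δ : ℕ → WithTop Γ} (hδ : StrictMono δ) {x y : WithTop Γ}
    (hx : x ≠ ⊤) (hy : y ≠ ⊤) {i j : ℕ} (hij : i ≠ j) :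
    (∀ᶠ n in atTop, x + i • δ n < y + j • δ n) ∨
      ∀ᶠ n in atTop, y + j • δ n < x + i • δ n := by
  lift δ to ℕ → Γ using fun n => (hδ n.lt_succ_self).ne_top
  lift x to Γ using hx
  lift y to Γ using hy
  have hc : StrictMono δ := fun m n h => WithTop.coe_lt_coe.1 (hδ h)
  simp only [← WithTop.coe_nsmul, ← WithTop.coe_add, WithTop.coe_lt_coe]
  rcases hij.lt_or_gt with h | h
  · exact _root_.eventually_add_nsmul_lt_or_gt hc x y h
  · exact (_root_.eventually_add_nsmul_lt_or_gt hc y x h).symm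

theorem Finset.existsUnique_eventually_forall_lt {ι β α : Type*} [LinearOrder α] {l : Filter β}
    [l.NeBot] {S : Finset ι} (hS : S.Nonempty) (f : ι → β → α)
    (h : ∀ i ∈ S, ∀ j ∈ S, i ≠ j →
      (∀ᶠ x in l, f i x < f j x) ∨ ∀ᶠ x in l, f j x < f i x) :
    ∃! k, k ∈ S ∧ ∀ᶠ x in l, ∀ i ∈ S, i ≠ k → f k x < f i x := by
  refine existsUnique_of_exists_of_unique ?_ fun k k' ⟨hkS, hk⟩ ⟨hk'S, hk'⟩ => ?_
  · induction hS using Finset.Nonempty.cons_induction with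
    | singleton a =>
      exact ⟨a, mem_singleton_self a,
        .of_forall fun _ i hi hia => (hia (mem_singleton.1 hi)).elim⟩
    | cons a S haS hS ih =>
      obtain ⟨k, hkS, hk⟩ := ih fun i hi j hj => h i (mem_cons_of_mem hi) j (mem_cons_of_mem hj)
      have hak : a ≠ k := fun hak => haS (hak ▸ hkS)
      rcases h a (mem_cons_self a S) k (mem_cons_of_mem hkS) hak with hlt | hgt
      · refine ⟨a, mem_cons_self a S, (hlt.and hk).mono fun x ⟨hak, hk⟩ i hi hia => ?_⟩
        obtain rfl | hiS := mem_cons.1 hi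
        · exact (hia rfl).elim
        obtain rfl | hik := eq_or_ne i k
        · exact hak
        · exact hak.trans (hk i hiS hik)
      · refine ⟨k, mem_cons_of_mem hkS, (hgt.and hk).mono fun x ⟨hka, hk⟩ i hi hik => ?_⟩
        obtain rfl | hiS := mem_cons.1 hi
        · exact hka
        · exact hk i hiS hik
  · by_contra hne
    obtain ⟨x, hx, hx'⟩ := (hk.and hk').exists
    exact (hx k' hk'S (Ne.symm hne)).asymm (hx' k hkS hne)

theorem stmt9_general {K Γ : Type*} [Field K] [AddCommGroup Γ] [LinearOrder Γ]
    [IsOrderedAddMonoid Γ]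
    (v : AddValuation K (WithTop Γ)) (s : ℕ → K)
    (β : K) (hβ : ∀ n, v (β - s n) < v (β - s (n + 1)))
    (d : ℕ) (a : ℕ → K) (hne : ∃ i ≤ d, a i ≠ 0) :
    ∃! k : ℕ, k ≤ d ∧ ∃ N, ∀ n ≥ N,
      v (∑ i ∈ Finset.range (d + 1), a i * (s n - β) ^ i) =
          v (a k) + k • v (s n - β) ∧
      ∀ i ≤ d, i ≠ k → a i ≠ 0 →
        v (a k) + k • v (s n - β) < v (a i) + i • v (s n - β) := by
  classical
  set S := {i ∈ Finset.range (d + 1) | a i ≠ 0}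
  have mem_S {i : ℕ} : i ∈ S ↔ i ≤ d ∧ a i ≠ 0 := by simp [S]
  have hδ : StrictMono fun n => v (s n - β) :=
    strictMono_nat_of_lt_succ fun n => by simpa only [v.map_sub_swap] using hβ n
  obtain ⟨k, ⟨hkS, hk⟩, huniq⟩ := S.existsUnique_eventually_forall_lt (l := atTop)
    (hne.imp fun i hi => mem_S.2 hi) (fun i n => v (a i) + i • v (s n - β))
    fun i hi j hj hij => WithTop.eventually_add_nsmul_lt_or_gt hδ
      (v.ne_top_iff.2 (mem_S.1 hi).2) (v.ne_top_iff.2 (mem_S.1 hj).2) hij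
  have hterm (i n : ℕ) : v (a i * (s n - β) ^ i) = v (a i) + i • v (s n - β) := by
    rw [v.map_mul, v.map_pow]
  refine ⟨k, ⟨(mem_S.1 hkS).1, eventually_atTop.1 (hk.mono fun n hn => ⟨?_, ?_⟩)⟩, ?_⟩
  · rw [← Finset.sum_filter_of_ne fun i _ hi => left_ne_zero_of_mul hi, ← hterm]
    exact v.map_sum_eq_of_lt hkS fun i hi => by
      rw [hterm, hterm]
      obtain ⟨hiS, hik⟩ := Finset.mem_sdiff.1 hi
      exact hn i hiS (Finset.notMem_singleton.1 hik)
  · exact fun i hi hik hai => hn i (mem_S.2 ⟨hi, hai⟩) hik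
  · rintro k' ⟨hk'd, N, hN⟩
    have hak' : a k' ≠ 0 := by
      rintro hzero
      obtain ⟨i, hi, hai⟩ := hne
      have := (hN N le_rfl).2 i hi (by rintro rfl; exact hai hzero) hai
      simp [hzero] at this
    exact huniq k' ⟨mem_S.2 ⟨hk'd, hak'⟩, eventually_atTop.2
      ⟨N, fun n hn i hi hik => (hN n hn).2 i (mem_S.1 hi).1 hik (mem_S.1 hi).2⟩⟩

/-- Dominating degree of a polynomial: if E = {s_n} is pseudo-convergent with
pseudo-limit β and f(X) = Σ a_i (X - β)^i is nonzero, there is a unique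
k ∈ {0,...,d} (and some N) such that v(f(s_n)) = v(a_k) + k·v(s_n - β) for all
n ≥ N, and v(a_k) + k·δ_n < v(a_i) + i·δ_n for all i ≠ k with a_i ≠ 0,
where δ_n = v(s_n - β). -/
theorem stmt9 {K Γ : Type*} [Field K] [AddCommGroup Γ] [LinearOrder Γ]
    [IsOrderedAddMonoid Γ]
    (v : AddValuation K (WithTop Γ)) (s : ℕ → K)
    (hE : ∀ n, v (s (n + 1) - s n) < v (s (n + 2) - s (n + 1)))
    (β : K) (hβ : ∀ n, v (β - s n) < v (β - s (n + 1)))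
    (d : ℕ) (a : ℕ → K) (hne : ∃ i ≤ d, a i ≠ 0) :
    ∃! k : ℕ, k ≤ d ∧ ∃ N, ∀ n ≥ N,
      v (∑ i ∈ Finset.range (d + 1), a i * (s n - β) ^ i) =
          v (a k) + k • v (s n - β) ∧
      ∀ i ≤ d, i ≠ k → a i ≠ 0 →
        v (a k) + k • v (s n - β) < v (a i) + i • v (s n - β) :=
  stmt9_general v s β hβ d a hne
end

section
/- Let V be a valuation domain with valuation v and quotient field K, let E = {s_n} be a pseudo-convergent sequence of algebraic type in K, and let V_E = {φ ∈ K(X) : φ(s_n) ∈ V for all but finitely many n}. Then V_E is a valuation ring of K(X): for every nonzero φ ∈ K(X), either φ ∈ V_E or φ^{-1} ∈ V_E. -/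
/-!
Extend `v` to a valuation `w` on an algebraic closure of `K`; the gauge `γₙ = w (sₙ₊₁ - sₙ)` is
strictly decreasing. For every `θ`, the ultrametric inequality forces `w (sₙ - θ)` either to equal
`γₙ` for all `n` or to be eventually constant. Splitting a polynomial `f` into linear factors,
`w (f (sₙ))` is therefore eventually `c * γₙ ^ e` with `c ≠ 0`, and two sequences of this shape are
eventually comparable because `γ` is monotone. Applied to the numerator and denominator of `φ`,
this gives `v (φ (sₙ)) ≥ 0` or `v (φ⁻¹ (sₙ)) ≥ 0` for all large `n`.
-/

open Filter

/-- Membership in V_E: φ(s_n) is defined and lies in V for all but finitely many n. -/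
def memVE {K Γ : Type*} [Field K] [AddCommGroup Γ] [LinearOrder Γ] [IsOrderedAddMonoid Γ]
    (v : AddValuation K (WithTop Γ)) (s : ℕ → K) (φ : RatFunc K) : Prop :=
  ∀ᶠ n in atTop, (RatFunc.denom φ).eval (s n) ≠ 0 ∧
    0 ≤ v (RatFunc.eval (RingHom.id K) (s n) φ)

open Polynomial

theorem ValuationSubring.exists_comap_eq {K L : Type*} [Field K] [Field L] (f : K →+* L)
    (A : ValuationSubring K) : ∃ B : ValuationSubring L, B.comap f = A := by
  obtain ⟨B, hAB, hloc⟩ := IsLocalRing.exists_factor_valuationRing (f.comp A.subtype)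
  refine ⟨B, le_antisymm (fun x hx => ?_) fun x hx => hAB ⟨x, hx⟩⟩
  rcases A.mem_or_inv_mem x with hxA | hxA
  · exact hxA
  obtain rfl | hx0 := eq_or_ne x 0
  · exact A.zero_mem
  -- `f : A → B` is local, and `f x⁻¹` is a unit of `B` with inverse `f x`
  have hunit : IsUnit (⟨x⁻¹, hxA⟩ : A) := by
    refine IsUnit.of_map ((f.comp A.subtype).codRestrict B.toSubring hAB) _ ?_
    exact isUnit_iff_exists_inv.2 ⟨⟨f x, hx⟩, Subtype.ext (by simp [hx0])⟩
  rw [← A.valuation_le_one_iff, ← inv_inv x, map_inv₀,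
    (A.valuation_eq_one_iff _).1 hunit, inv_one]

theorem Valuation.exists_valuationSubring_comap_isEquiv {K L Γ₀ : Type*} [Field K] [Field L]
    [LinearOrderedCommGroupWithZero Γ₀] (v : Valuation K Γ₀) (f : K →+* L) :
    ∃ B : ValuationSubring L, (B.valuation.comap f).IsEquiv v := by
  obtain ⟨B, hB⟩ := ValuationSubring.exists_comap_eq f v.valuationSubring
  refine ⟨B, Valuation.isEquiv_of_val_le_one fun x => ?_⟩
  rw [comap_apply, B.valuation_le_one_iff, ← v.mem_valuationSubring_iff, ← hB]
  rfl

section EventuallyMonomial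

variable {Γ₀ : Type*} [LinearOrderedCommGroupWithZero Γ₀]

def EventuallyMonomial (γ u : ℕ → Γ₀) : Prop :=
  ∃ c ≠ 0, ∃ e : ℕ, ∀ᶠ n in atTop, u n = c * γ n ^ e

namespace EventuallyMonomial

variable {γ u u' : ℕ → Γ₀}

lemma const {c : Γ₀} (hc : c ≠ 0) : EventuallyMonomial γ fun _ => c :=
  ⟨c, hc, 0, .of_forall fun _ => by rw [pow_zero, mul_one]⟩

lemma self : EventuallyMonomial γ γ :=
  ⟨1, one_ne_zero, 1, .of_forall fun _ => by rw [one_mul, pow_one]⟩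

lemma mul (hu : EventuallyMonomial γ u) (hu' : EventuallyMonomial γ u') :
    EventuallyMonomial γ fun n => u n * u' n := by
  obtain ⟨c, hc, e, h⟩ := hu
  obtain ⟨c', hc', e', h'⟩ := hu'
  refine ⟨c * c', mul_ne_zero hc hc', e + e', ?_⟩
  filter_upwards [h, h'] with n hn hn'
  rw [hn, hn', pow_add, mul_mul_mul_comm]

lemma multiset_prod {ι : Type*} (s : Multiset ι) {u : ι → ℕ → Γ₀}
    (hu : ∀ i ∈ s, EventuallyMonomial γ (u i)) :
    EventuallyMonomial γ fun n => (s.map fun i => u i n).prod := by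
  induction s using Multiset.induction with
  | empty => simpa using const (γ := γ) one_ne_zero
  | cons i s ih =>
    simp only [Multiset.map_cons, Multiset.prod_cons]
    exact (hu i (Multiset.mem_cons_self i s)).mul
      (ih fun j hj => hu j (Multiset.mem_cons_of_mem hj))

lemma eventually_ne_zero (hγ : ∀ n, γ n ≠ 0) (hu : EventuallyMonomial γ u) :
    ∀ᶠ n in atTop, u n ≠ 0 := by
  obtain ⟨c, hc, e, h⟩ := hu
  filter_upwards [h] with n hn
  rw [hn]
  exact mul_ne_zero hc (pow_ne_zero e (hγ n))

lemma eventually_mul_pow_le_or_eventually_le (hγ : Antitone γ) (c c' : Γ₀) (k e : ℕ) :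
    (∀ᶠ n in atTop, c * γ n ^ (k + e) ≤ c' * γ n ^ e) ∨
      ∀ᶠ n in atTop, c' * γ n ^ e ≤ c * γ n ^ (k + e) := by
  simp_rw [pow_add, ← mul_assoc]
  by_cases h : ∃ N, c * γ N ^ k ≤ c'
  · obtain ⟨N, hN⟩ := h
    refine .inl ((eventually_ge_atTop N).mono fun n hn => ?_)
    calc c * γ n ^ k * γ n ^ e ≤ c * γ N ^ k * γ n ^ e := by gcongr; exact hγ hn
      _ ≤ c' * γ n ^ e := by gcongr
  · push Not at h
    exact .inr (.of_forall fun n => by gcongr; exact (h n).le)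

lemma eventually_le_or_eventually_le (hγ : Antitone γ) (hu : EventuallyMonomial γ u)
    (hu' : EventuallyMonomial γ u') :
    (∀ᶠ n in atTop, u n ≤ u' n) ∨ ∀ᶠ n in atTop, u' n ≤ u n := by
  obtain ⟨c, -, e, h⟩ := hu
  obtain ⟨c', -, e', h'⟩ := hu'
  wlog hle : e' ≤ e generalizing u u' c c' e e'
  · exact (this c' e' h' c e h (le_of_not_ge hle)).symm
  obtain ⟨k, rfl⟩ := Nat.exists_eq_add_of_le' hle
  refine (eventually_mul_pow_le_or_eventually_le hγ c c' k e').imp ?_ ?_ <;>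
    exact fun H => by filter_upwards [H, h, h'] with n hn h h'; rwa [h, h']

end EventuallyMonomial

end EventuallyMonomial

namespace Valuation

variable {L Γ₀ : Type*} [Field L] [LinearOrderedCommGroupWithZero Γ₀] (w : Valuation L Γ₀)

def gauge (t : ℕ → L) (n : ℕ) : Γ₀ := w (t (n + 1) - t n)

variable {w} {t : ℕ → L}

lemma gauge_ne_zero (ht : StrictAnti (w.gauge t)) (n : ℕ) : w.gauge t n ≠ 0 :=
  (zero_le.trans_lt (ht n.lt_succ_self)).ne'

lemma map_sub_eq_of_gauge_lt (ht : Antitone (w.gauge t)) {θ : L} {k : ℕ}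
    (hk : w.gauge t k < w (t k - θ)) {n : ℕ} (hn : k ≤ n) : w (t n - θ) = w (t k - θ) := by
  induction n, hn using Nat.le_induction with
  | base => rfl
  | succ n hn ih =>
    have hlt : w (t (n + 1) - t n) < w (t n - θ) := ih ▸ (ht hn).trans_lt hk
    rw [← ih, ← sub_add_sub_cancel (t (n + 1)) (t n) θ, add_comm,
      w.map_add_eq_of_lt_left hlt]

lemma eventuallyMonomial_of_gauge_lt (ht : Antitone (w.gauge t)) {θ : L} {k : ℕ}
    (hk : w.gauge t k < w (t k - θ)) :
    EventuallyMonomial (w.gauge t) fun n => w (t n - θ) :=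
  ⟨w (t k - θ), (zero_le.trans_lt hk).ne', 0, (eventually_ge_atTop k).mono fun n hn => by
    simpa using map_sub_eq_of_gauge_lt ht hk hn⟩

lemma eventuallyMonomial_map_sub (ht : StrictAnti (w.gauge t)) (θ : L) :
    EventuallyMonomial (w.gauge t) fun n => w (t n - θ) := by
  by_cases hall : ∀ n, w (t n - θ) = w.gauge t n
  · rw [funext hall]
    exact .self
  push Not at hall
  obtain ⟨k, hk⟩ := hall
  rcases hk.lt_or_gt with hlt | hgt
  · have hnext : w (t (k + 1) - θ) = w.gauge t k := by
      rw [← sub_add_sub_cancel (t (k + 1)) (t k) θ, w.map_add_eq_of_lt_left hlt, gauge]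
    exact eventuallyMonomial_of_gauge_lt ht.antitone (hnext ▸ ht k.lt_succ_self)
  · exact eventuallyMonomial_of_gauge_lt ht.antitone hgt

lemma eventuallyMonomial_map_eval (ht : StrictAnti (w.gauge t)) {f : L[X]} (hf : f.Splits)
    (hf0 : f ≠ 0) : EventuallyMonomial (w.gauge t) fun n => w (f.eval (t n)) := by
  simp only [hf.eval_eq_prod_roots, map_mul, map_multiset_prod, Multiset.map_map,
    Function.comp_def]
  exact (EventuallyMonomial.const ((w.ne_zero_iff).2 (leadingCoeff_ne_zero.2 hf0))).mul
    (EventuallyMonomial.multiset_prod _ fun θ _ => eventuallyMonomial_map_sub ht θ)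

end Valuation

lemma AddValuation.nonneg_map_div_iff {K Γ₀ : Type*} [Field K]
    [LinearOrderedAddCommGroupWithTop Γ₀] (v : AddValuation K Γ₀) {a b : K} (hb : b ≠ 0) :
    0 ≤ v (a / b) ↔ v b ≤ v a := by
  change v.toValuation (a / b) ≤ 1 ↔ v.toValuation a ≤ v.toValuation b
  rw [map_div₀, div_le_one₀ (v.toValuation.pos_iff.2 hb)]

section ExtensionToAlgClosed

variable {K L Γ₀ : Type*} [Field K] [Field L] [IsAlgClosed L] [Algebra K L]
  [LinearOrderedCommGroupWithZero Γ₀] {w : Valuation L Γ₀} {s : ℕ → K} {p : K[X]}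

lemma eventuallyMonomial_map_algebraMap_eval (hγ : StrictAnti (w.gauge (algebraMap K L ∘ s)))
    (hp : p ≠ 0) : EventuallyMonomial (w.gauge (algebraMap K L ∘ s))
      fun n => w (algebraMap K L (p.eval (s n))) := by
  simpa [eval_map, hom_eval₂] using
    w.eventuallyMonomial_map_eval hγ (IsAlgClosed.splits (p.map (algebraMap K L)))
      (map_ne_zero hp)

lemma eventually_eval_ne_zero (hγ : StrictAnti (w.gauge (algebraMap K L ∘ s))) (hp : p ≠ 0) :
    ∀ᶠ n in atTop, p.eval (s n) ≠ 0 :=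
  ((eventuallyMonomial_map_algebraMap_eval hγ hp).eventually_ne_zero
    (Valuation.gauge_ne_zero hγ)).mono fun n h h0 => h (by simp [h0])

end ExtensionToAlgClosed

section PseudoConvergent

variable {K Γ : Type*} [Field K] [AddCommGroup Γ] [LinearOrder Γ] [IsOrderedAddMonoid Γ]
  {v : AddValuation K (WithTop Γ)} {s : ℕ → K}

lemma strictAnti_gauge_of_isEquiv {L : Type*} [Field L] [Algebra K L] {B : ValuationSubring L}
    (hB : (B.valuation.comap (algebraMap K L)).IsEquiv v.toValuation)
    (hE : ∀ n, v (s (n + 1) - s n) < v (s (n + 2) - s (n + 1))) :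
    StrictAnti (B.valuation.gauge (algebraMap K L ∘ s)) :=
  strictAnti_nat_of_succ_lt fun n => by
    simpa [Valuation.gauge, ← map_sub] using hB.lt_iff_lt.2 (hE n)

lemma memVE_of_eq_div {φ : RatFunc K} {p q : K[X]}
    (hφ : φ = algebraMap K[X] (RatFunc K) p / algebraMap K[X] (RatFunc K) q)
    (h : ∀ᶠ n in atTop, q.eval (s n) ≠ 0 ∧ v (q.eval (s n)) ≤ v (p.eval (s n))) :
    memVE v s φ := by
  filter_upwards [h] with n ⟨hq, hle⟩
  have hq0 : q ≠ 0 := by rintro rfl; simp at hq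
  have hden : φ.denom.eval (s n) ≠ 0 := fun h0 =>
    hq (zero_dvd_iff.1 (h0 ▸ eval_dvd (hφ ▸ RatFunc.denom_div_dvd p q)))
  have hcross : φ.num * q = p * φ.denom := by
    apply RatFunc.algebraMap_injective K
    rw [map_mul, map_mul, ← div_eq_div_iff (RatFunc.algebraMap_ne_zero φ.denom_ne_zero)
      (RatFunc.algebraMap_ne_zero hq0), RatFunc.num_div_denom, hφ]
  have heval : RatFunc.eval (RingHom.id K) (s n) φ = p.eval (s n) / q.eval (s n) := by
    change φ.num.eval (s n) / φ.denom.eval (s n) = _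
    rw [div_eq_div_iff hden hq, ← eval_mul, ← eval_mul, hcross]
  exact ⟨hden, heval ▸ (v.nonneg_map_div_iff hq).2 hle⟩

end PseudoConvergent

theorem stmt10_general {K Γ : Type*} [Field K] [AddCommGroup Γ] [LinearOrder Γ] [IsOrderedAddMonoid Γ]
    (v : AddValuation K (WithTop Γ)) (s : ℕ → K)
    (hE : ∀ n, v (s (n + 1) - s n) < v (s (n + 2) - s (n + 1))) :
    ∀ φ : RatFunc K, φ ≠ 0 → memVE v s φ ∨ memVE v s φ⁻¹ := by
  intro φ hφ
  obtain ⟨B, hB⟩ :=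
    v.toValuation.exists_valuationSubring_comap_isEquiv (algebraMap K (AlgebraicClosure K))
  have hγ := strictAnti_gauge_of_isEquiv hB hE
  have hnum := RatFunc.num_ne_zero hφ
  have hden := φ.denom_ne_zero
  rcases (eventuallyMonomial_map_algebraMap_eval hγ hnum).eventually_le_or_eventually_le
    hγ.antitone (eventuallyMonomial_map_algebraMap_eval hγ hden) with h | h
  · refine .inl (memVE_of_eq_div φ.num_div_denom.symm ?_)
    exact (eventually_eval_ne_zero hγ hden).and (h.mono fun n => hB.le_iff_le.1)
  · refine .inr (memVE_of_eq_div (by rw [← inv_div, φ.num_div_denom]) ?_)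
    exact (eventually_eval_ne_zero hγ hnum).and (h.mono fun n => hB.le_iff_le.1)

/-- For a pseudo-convergent sequence E of algebraic type, V_E is a valuation ring
of K(X): for every nonzero φ, either φ ∈ V_E or φ⁻¹ ∈ V_E. -/
theorem stmt10 {K Γ : Type*} [Field K] [AddCommGroup Γ] [LinearOrder Γ] [IsOrderedAddMonoid Γ]
    (v : AddValuation K (WithTop Γ)) (s : ℕ → K)
    (hE : ∀ n, v (s (n + 1) - s n) < v (s (n + 2) - s (n + 1)))
    (halg : ∃ f : Polynomial K, ∃ N, ∀ n ≥ N, v (f.eval (s n)) < v (f.eval (s (n + 1)))) :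
    ∀ φ : RatFunc K, φ ≠ 0 → memVE v s φ ∨ memVE v s φ⁻¹ :=
  stmt10_general v s hE
end

section
/- Let E = {s_n} ⊂ K be a pseudo-convergent sequence with pseudo-limit β ∈ K, and let v_E be the valuation associated to V_E = {φ ∈ K(X) : φ(s_n) ∈ V for almost all n}. Let Δ_E = v_E(X - β). Then Δ_E is not torsion modulo the value group Γ_v of v: if k ∈ ℕ satisfies k·Δ_E ∈ Γ_v, then k = 0. -/
/-!
If both (X - β)^k / a and its inverse lie in V_E, then (s_n - β)^k / a is a unit of V for almost
all n, i.e. k • v(β - s_n) = v(a) eventually. Since v(β - s_n) is strictly increasing, and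
multiplication by k ≠ 0 is strictly monotone on a torsion-free ordered group, this forces k = 0.
-/

open Filter

theorem WithTop.nsmul_lt_nsmul_right {Γ : Type*} [AddCommGroup Γ] [LinearOrder Γ]
    [IsOrderedAddMonoid Γ] {a b : WithTop Γ} {k : ℕ} (hk : k ≠ 0) (hab : a < b) :
    k • a < k • b := by
  lift a to Γ using hab.ne_top
  induction b with
  | top =>
    obtain ⟨k, rfl⟩ := Nat.exists_eq_add_one_of_ne_zero hk
    rw [succ_nsmul (⊤ : WithTop Γ) k, WithTop.add_top]
    exact WithTop.coe_lt_top _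
  | coe b =>
    rw [← WithTop.coe_nsmul, ← WithTop.coe_nsmul, WithTop.coe_lt_coe]
    exact _root_.nsmul_lt_nsmul_right hk (WithTop.coe_lt_coe.mp hab)

theorem RatFunc.eval_X_sub_C_pow_div_C {K : Type*} [Field K] (β a x : K) (k : ℕ) :
    eval (RingHom.id K) x ((X - C β) ^ k / C a) = (x - β) ^ k / a := by
  have hpoly : (X - C β) ^ k / C a = algebraMap (Polynomial K) (RatFunc K)
      (Polynomial.C a⁻¹ * (Polynomial.X - Polynomial.C β) ^ k) := by
    rw [map_mul, map_pow, map_sub, algebraMap_X, algebraMap_C, algebraMap_C, map_inv₀,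
      div_eq_mul_inv, mul_comm]
  rw [hpoly, eval_algebraMap]
  simp [Polynomial.eval₂_eq_eval_map, div_eq_mul_inv, mul_comm]

section
variable {K Γ : Type*} [Field K] [AddCommGroup Γ] [LinearOrder Γ] [IsOrderedAddMonoid Γ]
  {v : AddValuation K (WithTop Γ)} {s : ℕ → K}

theorem memVE.eventually_valuation_eval_eq_zero {φ ψ : RatFunc K} (hφ : memVE v s φ)
    (hψ : memVE v s ψ) (hφψ : φ * ψ = 1) :
    ∀ᶠ n in atTop, v (RatFunc.eval (RingHom.id K) (s n) φ) = 0 := by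
  filter_upwards [hφ, hψ] with n ⟨hdφ, hvφ⟩ ⟨hdψ, hvψ⟩
  have hsum : v (RatFunc.eval (RingHom.id K) (s n) φ) + v (RatFunc.eval (RingHom.id K) (s n) ψ)
      = 0 := by
    rw [← v.map_mul, ← RatFunc.eval_mul (f := RingHom.id K) (a := s n) hdφ hdψ, hφψ,
      RatFunc.eval_one, v.map_one]
  exact le_antisymm (hsum ▸ le_add_of_nonneg_right hvψ) hvφ

theorem eventually_nsmul_valuation_sub_eq_of_memVE {β a : K} {k : ℕ} (ha : a ≠ 0)
    (h₁ : memVE v s ((RatFunc.X - RatFunc.C β) ^ k / RatFunc.C a))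
    (h₂ : memVE v s (RatFunc.C a / (RatFunc.X - RatFunc.C β) ^ k)) :
    ∀ᶠ n in atTop, k • v (β - s n) = v a := by
  have hXβ : (RatFunc.X - RatFunc.C β : RatFunc K) ≠ 0 := by
    rw [← RatFunc.algebraMap_X, ← RatFunc.algebraMap_C, ← map_sub]
    exact RatFunc.algebraMap_ne_zero (Polynomial.X_sub_C_ne_zero β)
  have hunit : (RatFunc.X - RatFunc.C β) ^ k / RatFunc.C a *
      (RatFunc.C a / (RatFunc.X - RatFunc.C β) ^ k) = 1 :=
    (div_mul_div_cancel₀ (by simpa using ha)).trans (div_self (pow_ne_zero k hXβ))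
  filter_upwards [h₁.eventually_valuation_eval_eq_zero h₂ hunit] with n hn
  rw [RatFunc.eval_X_sub_C_pow_div_C] at hn
  rw [← v.map_neg (β - s n), neg_sub, ← v.map_pow, ← div_mul_cancel₀ ((s n - β) ^ k) ha,
    v.map_mul, hn, zero_add]

end

theorem stmt12_general {K Γ : Type*} [Field K] [AddCommGroup Γ] [LinearOrder Γ] [IsOrderedAddMonoid Γ]
    (v : AddValuation K (WithTop Γ)) (s : ℕ → K)
    (β : K) (hβ : ∀ n, v (β - s n) < v (β - s (n + 1))) :
    ∀ k : ℕ, ∀ a : K, a ≠ 0 →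
      memVE v s ((RatFunc.X - RatFunc.C β) ^ k / RatFunc.C a) →
      memVE v s (RatFunc.C a / (RatFunc.X - RatFunc.C β) ^ k) →
      k = 0 := by
  intro k a ha h₁ h₂
  by_contra hk
  obtain ⟨N, hN⟩ :=
    eventually_atTop.mp (eventually_nsmul_valuation_sub_eq_of_memVE ha h₁ h₂)
  exact (WithTop.nsmul_lt_nsmul_right hk (hβ N)).ne
    ((hN N le_rfl).trans (hN (N + 1) N.le_succ).symm)

/-- Δ_E = v_E(X - β) is not torsion modulo Γ_v: if k·Δ_E = v(a) for some a ∈ K*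
(i.e. (X - β)^k/a is a unit of V_E), then k = 0. -/
theorem stmt12 {K Γ : Type*} [Field K] [AddCommGroup Γ] [LinearOrder Γ] [IsOrderedAddMonoid Γ]
    (v : AddValuation K (WithTop Γ)) (s : ℕ → K)
    (hE : ∀ n, v (s (n + 1) - s n) < v (s (n + 2) - s (n + 1)))
    (β : K) (hβ : ∀ n, v (β - s n) < v (β - s (n + 1))) :
    ∀ k : ℕ, ∀ a : K, a ≠ 0 →
      memVE v s ((RatFunc.X - RatFunc.C β) ^ k / RatFunc.C a) →
      memVE v s (RatFunc.C a / (RatFunc.X - RatFunc.C β) ^ k) →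
      k = 0 :=
  stmt12_general v s β hβ
end

section
/- Let (K, v) be a rank one valued field, and let E, F ⊂ K be pseudo-convergent sequences of transcendental type with the same Ostrowski valuation ring W_E = W_F. Then w_E = w_F, i.e., lim v(φ(s_n)) = lim v(φ(t_n)) for every nonzero φ ∈ K(X). -/
/-!
The gaps `v (s (n + 1) - s n)` increase strictly, so the terms of a pseudo-convergent sequence
are pairwise distinct and a nonzero polynomial vanishes at only finitely many of them. Since
`v (f (s n))` is eventually constant for every polynomial `f`, for `φ = f / g` the value
`v (φ (s n))` is eventually `v x` for some nonzero `x ∈ K`. Then `x⁻¹ φ ∈ W_E = W_F`, which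
forces `v x ≤ w_F(φ)`; by symmetry `w_E(φ) = w_F(φ)`.
-/

open Filter

namespace PseudoConvergent

variable {R Γ : Type*} [CommRing R] [LinearOrderedAddCommMonoidWithTop Γ] (v : AddValuation R Γ)
  {s : ℕ → R}

theorem val_sub_eq_of_lt (hs : ∀ n, v (s (n + 1) - s n) < v (s (n + 2) - s (n + 1)))
    {n m : ℕ} (h : n < m) : v (s m - s n) = v (s (n + 1) - s n) := by
  induction m, h using Nat.le_induction with
  | base => rfl
  | succ m hnm ih =>
    have hlt : v (s m - s n) < v (s (m + 1) - s m) := by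
      rw [ih]
      exact strictMono_nat_of_lt_succ hs hnm
    rw [← sub_add_sub_cancel (s (m + 1)) (s m) (s n), v.map_add_eq_of_lt_right hlt, ih]

theorem injective (hs : ∀ n, v (s (n + 1) - s n) < v (s (n + 2) - s (n + 1))) :
    Function.Injective s :=
  Function.Injective.of_lt_imp_ne fun n m h heq => by
    have hval := val_sub_eq_of_lt v hs h
    rw [← heq, sub_self, v.map_zero] at hval
    exact (hs n).ne_top hval.symm

theorem eventually_eval_ne_zero [IsDomain R] (hs : ∀ n, v (s (n + 1) - s n) < v (s (n + 2) - s (n + 1)))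
    {p : Polynomial R} (hp : p ≠ 0) : ∀ᶠ n in atTop, p.eval (s n) ≠ 0 := by
  rw [← Nat.cofinite_eq_atTop]
  exact ((Polynomial.finite_setOfPred_isRoot hp).preimage
    (injective v hs).injOn).eventually_cofinite_notMem

end PseudoConvergent

namespace RatFunc

universe u

variable {K L : Type u} [Field K] [Field L]

theorem eval_C_mul {f : K →+* L} {a : L} {φ : RatFunc K} (hφ : φ.denom.eval₂ f a ≠ 0) (c : K) :
    eval f a (C c * φ) = f c * eval f a φ :=
  (eval_mul f a (by simp) hφ).trans (by rw [eval_C])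

end RatFunc

section OstrowskiRing

variable {K Γ : Type*} [Field K] [LinearOrderedAddCommGroupWithTop Γ] (v : AddValuation K Γ)

def ostrowskiRing (s : ℕ → K) : Set (RatFunc K) :=
  {φ | ∀ᶠ n in atTop, 0 ≤ v (RatFunc.eval (RingHom.id K) (s n) φ)}

theorem exists_eventually_val_eval_eq {s : ℕ → K}
    (hs : ∀ n, v (s (n + 1) - s n) < v (s (n + 2) - s (n + 1)))
    (hstr : ∀ f : Polynomial K, ∃ c : Γ, ∀ᶠ n in atTop, v (f.eval (s n)) = c)
    {φ : RatFunc K} (hφ : φ ≠ 0) :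
    ∃ x : K, x ≠ 0 ∧ ∀ᶠ n in atTop,
      φ.denom.eval (s n) ≠ 0 ∧ v (RatFunc.eval (RingHom.id K) (s n) φ) = v x := by
  obtain ⟨cnum, hnum⟩ := hstr φ.num
  obtain ⟨cdenom, hdenom⟩ := hstr φ.denom
  have hnum_ne := PseudoConvergent.eventually_eval_ne_zero v hs (RatFunc.num_ne_zero hφ)
  have hdenom_ne := PseudoConvergent.eventually_eval_ne_zero v hs φ.denom_ne_zero
  obtain ⟨N, hnumN, hdenomN, hnumN_ne, hdenomN_ne⟩ :=
    (hnum.and (hdenom.and (hnum_ne.and hdenom_ne))).exists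
  refine ⟨φ.num.eval (s N) / φ.denom.eval (s N), div_ne_zero hnumN_ne hdenomN_ne, ?_⟩
  filter_upwards [hnum, hdenom, hdenom_ne] with n hnum_n hdenom_n hdenom_ne_n
  refine ⟨hdenom_ne_n, ?_⟩
  rw [RatFunc.eval, Polynomial.eval₂_id, Polynomial.eval₂_id, v.map_div, v.map_div,
    hnum_n, hdenom_n, hnumN, hdenomN]

theorem val_le_of_ostrowskiRing_subset {s t : ℕ → K} {φ : RatFunc K} {x y : K} (hx : x ≠ 0)
    (hsx : ∀ᶠ n in atTop,
      φ.denom.eval (s n) ≠ 0 ∧ v (RatFunc.eval (RingHom.id K) (s n) φ) = v x)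
    (hty : ∀ᶠ n in atTop,
      φ.denom.eval (t n) ≠ 0 ∧ v (RatFunc.eval (RingHom.id K) (t n) φ) = v y)
    (hW : ostrowskiRing v s ⊆ ostrowskiRing v t) :
    v x ≤ v y := by
  have hmem : RatFunc.C x⁻¹ * φ ∈ ostrowskiRing v s := by
    filter_upwards [hsx] with n ⟨hdenom, hval⟩
    rw [RatFunc.eval_C_mul hdenom, RingHom.id_apply, v.map_mul, hval, ← v.map_mul,
      inv_mul_cancel₀ hx, v.map_one]
  obtain ⟨n, hn, hdenom, hval⟩ := ((hW hmem).and hty).exists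
  rw [RatFunc.eval_C_mul hdenom, RingHom.id_apply] at hn
  calc v x = v x + 0 := (add_zero _).symm
    _ ≤ v x + v (x⁻¹ * RatFunc.eval (RingHom.id K) (t n) φ) := add_le_add_right hn _
    _ = v y := by rw [← v.map_mul, mul_inv_cancel_left₀ hx, hval]

end OstrowskiRing

/-- If E = {s_n} and F = {t_n} are pseudo-convergent sequences of transcendental
type with the same Ostrowski valuation ring W_E = W_F, then w_E = w_F: for every
nonzero φ ∈ K(X) the (eventually constant) sequences v(φ(s_n)) and v(φ(t_n))
have the same limit. -/
theorem stmt17 {K : Type*} [Field K] (v : AddValuation K (WithTop ℝ)) (s t : ℕ → K)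
    (hE : ∀ n, v (s (n + 1) - s n) < v (s (n + 2) - s (n + 1)))
    (hF : ∀ n, v (t (n + 1) - t n) < v (t (n + 2) - t (n + 1)))
    (hEtr : ∀ f : Polynomial K, ∃ c : WithTop ℝ, ∀ᶠ n in atTop, v (f.eval (s n)) = c)
    (hFtr : ∀ f : Polynomial K, ∃ c : WithTop ℝ, ∀ᶠ n in atTop, v (f.eval (t n)) = c)
    (hW : {φ : RatFunc K | ∀ᶠ n in atTop, 0 ≤ v (RatFunc.eval (RingHom.id K) (s n) φ)} =
          {φ : RatFunc K | ∀ᶠ n in atTop, 0 ≤ v (RatFunc.eval (RingHom.id K) (t n) φ)}) :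
    ∀ φ : RatFunc K, φ ≠ 0 → ∃ c : WithTop ℝ,
      (∀ᶠ n in atTop, v (RatFunc.eval (RingHom.id K) (s n) φ) = c) ∧
      (∀ᶠ n in atTop, v (RatFunc.eval (RingHom.id K) (t n) φ) = c) := by
  change ostrowskiRing v s = ostrowskiRing v t at hW
  intro φ hφ
  obtain ⟨x, hx, hsx⟩ := exists_eventually_val_eval_eq v hE hEtr hφ
  obtain ⟨y, hy, hty⟩ := exists_eventually_val_eval_eq v hF hFtr hφ
  have hxy : v x = v y := le_antisymm
    (val_le_of_ostrowskiRing_subset v hx hsx hty hW.le)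
    (val_le_of_ostrowskiRing_subset v hy hty hsx hW.ge)
  exact ⟨v x, hsx.mono fun _ h => h.2, hty.mono fun _ h => hxy ▸ h.2⟩
end

section
/- Let V be a non-discrete rank one valuation domain with quotient field K, let u be an extension of v to the algebraic closure \overline{K}, let β ∈ \overline{K}, and let r > 0 be a real. Then the closed ball B = {x ∈ \overline{K} : d_u(x, β) ≤ r} equals the set of pseudo-limits (with respect to u) of some pseudo-convergent sequence E ⊂ K if and only if r ≥ d_u(β, K) := inf{e^{−u(β−x)} : x ∈ K}. -/
/-!
If the ball `{z | γ ≤ u (z - β)}` is the pseudo-limit set of a sequence `s` in `K`, then `β` is a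
pseudo-limit, and so is `β + t` for every `t ∈ K` with `u (β - s n) < v t` for all `n`; hence no
value of `v` lies strictly between `sup_{x ∈ K} u (β - x)` and `γ`, and density of the value group
gives `γ ≤ sup_{x ∈ K} u (β - x)`. Conversely, pick values `r n = v (t n)` increasing to `γ` and
`x n ∈ K` with `r n < u (β - x n)`; then `s n = x n - t n` satisfies `u (β - s n) = r n`, and a
sequence with `u (β - s n)` increasing strictly to `γ` has exactly the ball `{z | γ ≤ u (z - β)}`
as its set of pseudo-limits.
-/

theorem WithTop.isLUB_image_coe {α : Type*} [Preorder α] {s : Set α} {a : α} (h : IsLUB s a) :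
    IsLUB (((↑) : α → WithTop α) '' s) a := by
  refine ⟨?_, fun c hc => ?_⟩
  · rintro _ ⟨b, hb, rfl⟩
    exact coe_le_coe.mpr (h.1 hb)
  · induction c with
    | top => exact le_top
    | coe c => exact coe_le_coe.mpr (h.2 fun b hb => coe_le_coe.mp (hc ⟨b, hb, rfl⟩))

namespace AddValuation

section PseudoLimit

variable {L Γ₀ : Type*} [Ring L] [LinearOrderedAddCommMonoidWithTop Γ₀]

def pseudoLimitSet (u : AddValuation L Γ₀) (a : ℕ → L) : Set L :=
  {x | ∀ n, u (x - a n) < u (x - a (n + 1))}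

variable {u : AddValuation L Γ₀} {a : ℕ → L} {x : L}

theorem map_sub_eq_of_mem_pseudoLimitSet (hx : x ∈ u.pseudoLimitSet a) (n : ℕ) :
    u (x - a n) = u (a (n + 1) - a n) := by
  rw [← sub_sub_sub_cancel_left (a n) (a (n + 1)) x, u.map_sub_eq_of_lt_left (hx n)]

theorem map_sub_lt_of_mem_pseudoLimitSet (hx : x ∈ u.pseudoLimitSet a) (n : ℕ) :
    u (a (n + 1) - a n) < u (a (n + 2) - a (n + 1)) := by
  rw [← map_sub_eq_of_mem_pseudoLimitSet hx, ← map_sub_eq_of_mem_pseudoLimitSet hx]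
  exact hx n

theorem add_mem_pseudoLimitSet (hx : x ∈ u.pseudoLimitSet a) {t : L}
    (ht : ∀ n, u (x - a n) < u t) : x + t ∈ u.pseudoLimitSet a := by
  have h : ∀ n, u (x + t - a n) = u (x - a n) := fun n => by
    rw [add_sub_right_comm, u.map_add_eq_of_lt_left (ht n)]
  intro n
  rw [h, h]
  exact hx n

theorem le_map_of_pseudoLimitSet_eq {β : L} {γ : Γ₀}
    (h : u.pseudoLimitSet a = {z | γ ≤ u (z - β)}) {t : L} (ht : ∀ n, u (β - a n) < u t) :
    γ ≤ u t := by
  have hβ : β ∈ u.pseudoLimitSet a := by simp [h]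
  simpa [h] using add_mem_pseudoLimitSet hβ ht

theorem pseudoLimitSet_eq_of_map_sub_eq {β : L} {r : ℕ → Γ₀} {γ : Γ₀} (hr : StrictMono r)
    (hγ : IsLUB (Set.range r) γ) (hβ : ∀ n, u (β - a n) = r n) :
    u.pseudoLimitSet a = {z | γ ≤ u (z - β)} := by
  have hr_lt (n : ℕ) : r n < γ := (hr n.lt_succ_self).trans_le (hγ.1 ⟨n + 1, rfl⟩)
  have hβ_mem : β ∈ u.pseudoLimitSet a := fun n => by
    rw [hβ, hβ]
    exact hr n.lt_succ_self
  ext z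
  constructor
  · intro hz
    refine hγ.2 ?_
    rintro _ ⟨n, rfl⟩
    have hzn : u (z - a n) = r n := by
      rw [map_sub_eq_of_mem_pseudoLimitSet hz, ← map_sub_eq_of_mem_pseudoLimitSet hβ_mem, hβ]
    calc r n ≤ u ((z - a n) - (β - a n)) := u.map_le_sub hzn.ge (hβ n).ge
      _ = u (z - β) := by rw [sub_sub_sub_cancel_right]
  · intro hz
    have hzn (n : ℕ) : u (z - a n) = r n := by
      rw [← sub_add_sub_cancel z β (a n), u.map_add_eq_of_lt_right, hβ]
      rw [hβ]
      exact (hr_lt n).trans_le hz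
    intro n
    rw [hzn, hzn]
    exact hr n.lt_succ_self

end PseudoLimit

section Extension

variable {K L : Type*} [CommRing K] [Ring L] [Algebra K L]
  {v : AddValuation K (WithTop ℝ)} {u : AddValuation L (WithTop ℝ)}

theorem le_iSup_of_pseudoLimitSet_eq (hu : ∀ x : K, u (algebraMap K L x) = v x)
    (hv : Dense {r : ℝ | ∃ t : K, v t = r}) {s : ℕ → K} {β : L} {γ : ℝ}
    (h : u.pseudoLimitSet (fun n => algebraMap K L (s n)) = {z | (γ : WithTop ℝ) ≤ u (z - β)}) :
    (γ : WithTop ℝ) ≤ ⨆ x : K, u (β - algebraMap K L x) := by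
  by_contra! hlt
  obtain ⟨c, hc, hcγ⟩ := WithTop.lt_iff_exists_coe.mp hlt
  obtain ⟨r, ⟨t, htr⟩, hcr, hrγ⟩ := hv.exists_between (WithTop.coe_lt_coe.mp hcγ)
  have hγt : (γ : WithTop ℝ) ≤ u (algebraMap K L t) := by
    refine le_map_of_pseudoLimitSet_eq h fun n => ?_
    calc u (β - algebraMap K L (s n)) ≤ ⨆ x : K, u (β - algebraMap K L x) :=
          le_ciSup (f := fun x => u (β - algebraMap K L x)) (OrderTop.bddAbove _) (s n)
      _ = c := hc
      _ < u (algebraMap K L t) := by rw [hu, htr]; exact WithTop.coe_lt_coe.mpr hcr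
  rw [hu, htr] at hγt
  exact (WithTop.coe_le_coe.mp hγt).not_gt hrγ

theorem exists_pseudoLimitSet_eq_of_le_iSup (hu : ∀ x : K, u (algebraMap K L x) = v x)
    (hv : Dense {r : ℝ | ∃ t : K, v t = r}) {β : L} {γ : ℝ}
    (hγ : (γ : WithTop ℝ) ≤ ⨆ x : K, u (β - algebraMap K L x)) :
    ∃ s : ℕ → K,
      u.pseudoLimitSet (fun n => algebraMap K L (s n)) = {z | (γ : WithTop ℝ) ≤ u (z - β)} := by
  obtain ⟨r, hr_mono, hr_mem, hr_lim⟩ := hv.exists_seq_strictMono_tendsto γ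
  choose t ht using fun n => (hr_mem n).2
  choose x hx using fun n =>
    exists_lt_of_lt_ciSup ((WithTop.coe_lt_coe.mpr (hr_mem n).1).trans_le hγ)
  have hγ_lub : IsLUB (Set.range fun n => (r n : WithTop ℝ)) γ := by
    rw [← Function.comp_def, Set.range_comp]
    exact WithTop.isLUB_image_coe (isLUB_of_tendsto_atTop hr_mono.monotone hr_lim)
  refine ⟨fun n => x n - t n,
    pseudoLimitSet_eq_of_map_sub_eq (WithTop.coe_strictMono.comp hr_mono) hγ_lub fun n => ?_⟩
  have hsplit : β - algebraMap K L (x n - t n) =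
      (β - algebraMap K L (x n)) + algebraMap K L (t n) := by
    rw [_root_.map_sub]
    abel
  have htn : u (algebraMap K L (t n)) = r n := by rw [hu, ht]
  rw [hsplit, u.map_add_eq_of_lt_right (htn ▸ hx n), htn]
  rfl

end Extension

end AddValuation

theorem stmt18_general {K L : Type*} [Field K] [Field L] [Algebra K L]
    (v : AddValuation K (WithTop ℝ)) (u : AddValuation L (WithTop ℝ))
    (hu : ∀ x : K, u (algebraMap K L x) = v x)
    (hnondisc : ∀ a b : ℝ, a < b → ∃ x : K, x ≠ 0 ∧
      (a : WithTop ℝ) < v x ∧ v x < (b : WithTop ℝ))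
    (β : L) (γ : ℝ) :
    (∃ s : ℕ → K, (∀ n, v (s (n + 1) - s n) < v (s (n + 2) - s (n + 1))) ∧
        {x : L | ∀ n, u (x - algebraMap K L (s n)) < u (x - algebraMap K L (s (n + 1)))} =
          {x : L | (γ : WithTop ℝ) ≤ u (x - β)}) ↔
      (γ : WithTop ℝ) ≤ ⨆ x : K, u (β - algebraMap K L x) := by
  have hv : Dense {r : ℝ | ∃ t : K, v t = r} := dense_of_exists_between fun a b hab => by
    obtain ⟨t, -, hat, htb⟩ := hnondisc a b hab
    obtain ⟨r, htr, hrb⟩ := WithTop.lt_iff_exists_coe.mp htb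
    exact ⟨r, ⟨t, htr⟩, WithTop.coe_lt_coe.mp (htr ▸ hat), WithTop.coe_lt_coe.mp hrb⟩
  refine ⟨fun ⟨s, _, hs⟩ => AddValuation.le_iSup_of_pseudoLimitSet_eq hu hv hs, fun hγ => ?_⟩
  obtain ⟨s, hs⟩ := AddValuation.exists_pseudoLimitSet_eq_of_le_iSup hu hv hγ
  refine ⟨s, fun n => ?_, hs⟩
  have hβ : β ∈ u.pseudoLimitSet (fun n => algebraMap K L (s n)) := by simp [hs]
  simpa only [← _root_.map_sub, hu] using AddValuation.map_sub_lt_of_mem_pseudoLimitSet hβ n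

/-- Geometric characterization of pseudo-limit sets (reparametrized via
r = e^{-γ}, so that the closed ball of radius r around β is {x : γ ≤ u(x - β)}
and the condition r ≥ d_u(β, K) becomes γ ≤ sup_{x ∈ K} u(β - x)):
for a non-discrete rank one valuation v on K, β in the algebraic closure L and
γ ∈ ℝ, the closed ball {x : γ ≤ u(x - β)} is the set of pseudo-limits (w.r.t. u)
of some pseudo-convergent sequence in K iff γ ≤ sup_{x ∈ K} u(β - x). -/
theorem stmt18 {K L : Type*} [Field K] [Field L] [Algebra K L]
    [IsAlgClosed L] [Algebra.IsAlgebraic K L]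
    (v : AddValuation K (WithTop ℝ)) (u : AddValuation L (WithTop ℝ))
    (hu : ∀ x : K, u (algebraMap K L x) = v x)
    (hnondisc : ∀ a b : ℝ, a < b → ∃ x : K, x ≠ 0 ∧
      (a : WithTop ℝ) < v x ∧ v x < (b : WithTop ℝ))
    (β : L) (γ : ℝ) :
    (∃ s : ℕ → K, (∀ n, v (s (n + 1) - s n) < v (s (n + 2) - s (n + 1))) ∧
        {x : L | ∀ n, u (x - algebraMap K L (s n)) < u (x - algebraMap K L (s (n + 1)))} =
          {x : L | (γ : WithTop ℝ) ≤ u (x - β)}) ↔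
      (γ : WithTop ℝ) ≤ ⨆ x : K, u (β - algebraMap K L x) :=
  stmt18_general v u hu hnondisc β γ
end
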